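/- A column coadmissibility criterion: a column C over [±n] with doubled-letter set I = {z_1 > ... > z_r} is coadmissible if and only if there exist unbarred letters H = {h_1 > ... > h_r} ⊆ [n] such that h_r is the smallest letter > z_r with h_r ∉ C and -h_r ∉ C, and for i = r-1,...,1, h_i is the smallest letter > max(h_{i+1}, z_i) with h_i ∉ C and -h_i ∉ C. -/

import Mathlib

/-- The alphabet `[±n] = {1 < 2 < ⋯ < n < n̄ < ⋯ < 1̄}` is encoded as `{1, …, 2n} ⊆ ℕ`
with the usual order, the barred letter `ī` being encoded as `2n+1-i`. -/
def bar (n x : ℕ) : ℕ := 2 * n + 1 - x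

/-- A column over `[±n]`: a strictly increasing list with entries in `{1, …, 2n}`. -/
def IsColumn (n : ℕ) (C : List ℕ) : Prop :=
  C.Chain' (· < ·) ∧ ∀ x ∈ C, 1 ≤ x ∧ x ≤ 2 * n

/-- The one column condition (1CC): for every unbarred `i` with both `i` and `ī` in `C`,
the number of entries `x` with `x ≤ i` or `x ≥ ī` is at most `i`. -/
def OCC (n : ℕ) (C : List ℕ) : Prop :=
  ∀ i, 1 ≤ i → i ≤ n → i ∈ C → bar n i ∈ C →
    C.countP (fun x => decide (x ≤ i ∨ bar n i ≤ x)) ≤ i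

/-- A column is coadmissible if for every pair `i, ī` in `C`, the number `N*(i)` of
entries `x` with `i ≤ x ≤ ī` satisfies `N*(i) ≤ n - i + 1`. -/
def CoAdm (n : ℕ) (C : List ℕ) : Prop :=
  ∀ i, 1 ≤ i → i ≤ n → i ∈ C → bar n i ∈ C →
    C.countP (fun x => decide (i ≤ x ∧ x ≤ bar n i)) ≤ n - i + 1

/-- The set `I` of doubled unbarred letters of `C`, in increasing order `z_r < ⋯ < z₁`. -/
def IlistAsc (n : ℕ) (C : List ℕ) : List ℕ :=
  (List.range (n + 1)).filter (fun z => decide (1 ≤ z ∧ z ∈ C ∧ bar n z ∈ C))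

/-- The smallest unbarred letter `h > bound` with `h ∉ C` and `h̄ ∉ C`, if any. -/
def pickAbove (n : ℕ) (C : List ℕ) (bound : ℕ) : Option ℕ :=
  ((List.range (n + 1)).filter (fun t => decide (bound < t ∧ t ∉ C ∧ bar n t ∉ C))).min?

/-- The greedy construction of the set `H = {h₁ > ⋯ > h_r}` of the coadmissibility
criterion: `h_r` is the smallest letter `> z_r` with `h_r, h̄_r ∉ C`, and `hᵢ` is the
smallest letter `> max (hᵢ₊₁, zᵢ)` with `hᵢ, h̄ᵢ ∉ C`; the doubled letters are processed
in increasing order; returns `none` if at some stage no such letter exists. -/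
def coSplitH (n : ℕ) (C : List ℕ) : List ℕ → ℕ → Option (List ℕ)
  | [], _ => some []
  | z :: zs, bound =>
    match pickAbove n C (max bound z) with
    | none => none
    | some h => (coSplitH n C zs h).map (h :: ·)

/-- The set `H` of the coadmissibility criterion exists. -/
def HasCoSplit (n : ℕ) (C : List ℕ) : Prop :=
  (coSplitH n C (IlistAsc n C) 0).isSome = true

/-! Call an unbarred letter `t` free if neither `t` nor `t̄` lies in `C`, and doubled if both do.
For a doubled `z`, sorting the letters `t ∈ [z, n]` by which of `t, t̄` lie in `C` gives
`N*(z) + #{free t ≥ z} = (n - z + 1) + #{doubled t ≥ z}`. Since `z` itself is not free,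
coadmissibility says that for every doubled `z` there are at least as many free letters `> z` as
doubled letters `≥ z`: Hall's condition for matching each doubled letter to a larger free letter.
The greedy construction of `H` processes the doubled letters in increasing order, each time taking
the smallest free letter still available, and it succeeds exactly when Hall's condition holds. -/

open Finset

theorem countP_head_le_eq_length {α : Type*} [LinearOrder α] {z : α} {zs : List α}
    (hzs : (z :: zs).Pairwise (· < ·)) :
    (z :: zs).countP (fun w => decide (z ≤ w)) = zs.length + 1 := by
  rw [List.countP_eq_length.mpr, List.length_cons]
  intro w hw
  rcases List.mem_cons.mp hw with rfl | hw
  · simp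
  · simpa using (List.rel_of_pairwise_cons hzs hw).le

section Greedy

variable (n : ℕ) (C : List ℕ)

def freeAbove (m : ℕ) : Finset ℕ :=
  (Ioc m n).filter (fun t => t ∉ C ∧ bar n t ∉ C)

variable {n C}

theorem mem_freeAbove {m t : ℕ} :
    t ∈ freeAbove n C m ↔ m < t ∧ t ≤ n ∧ t ∉ C ∧ bar n t ∉ C := by
  simp [freeAbove, and_assoc]

theorem card_freeAbove_antitone : Antitone fun m => #(freeAbove n C m) :=
  fun _ _ h => card_le_card fun t ht => by
    rw [mem_freeAbove] at ht ⊢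
    exact ⟨h.trans_lt ht.1, ht.2⟩

theorem mem_pickAbove_list {m t : ℕ} :
    t ∈ (List.range (n + 1)).filter (fun t => decide (m < t ∧ t ∉ C ∧ bar n t ∉ C)) ↔
      t ∈ freeAbove n C m := by
  simp only [List.mem_filter, List.mem_range, decide_eq_true_eq, mem_freeAbove]
  exact ⟨fun ⟨hn, hm, hC⟩ => ⟨hm, by omega, hC⟩, fun ⟨hm, hn, hC⟩ => ⟨by omega, hm, hC⟩⟩

theorem pickAbove_eq_some_iff {m h : ℕ} :
    pickAbove n C m = some h ↔ h ∈ freeAbove n C m ∧ ∀ t ∈ freeAbove n C m, h ≤ t := by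
  simp only [pickAbove, List.min?_eq_some_iff, mem_pickAbove_list]

theorem pickAbove_eq_none_iff {m : ℕ} : pickAbove n C m = none ↔ freeAbove n C m = ∅ := by
  simp only [pickAbove, List.min?_eq_none_iff, List.eq_nil_iff_forall_not_mem,
    mem_pickAbove_list, eq_empty_iff_forall_notMem]

theorem card_freeAbove_of_pickAbove {m h : ℕ} (hp : pickAbove n C m = some h) :
    #(freeAbove n C m) = #(freeAbove n C h) + 1 := by
  obtain ⟨hmem, hmin⟩ := pickAbove_eq_some_iff.mp hp
  have : freeAbove n C m = insert h (freeAbove n C h) := by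
    ext t
    refine ⟨fun ht => ?_, fun ht => ?_⟩
    · rcases (hmin t ht).eq_or_lt with rfl | hlt
      · exact mem_insert_self _ _
      · exact mem_insert_of_mem (mem_freeAbove.mpr ⟨hlt, (mem_freeAbove.mp ht).2⟩)
    · rcases mem_insert.mp ht with rfl | ht
      · exact hmem
      · exact mem_freeAbove.mpr ⟨(mem_freeAbove.mp hmem).1.trans (mem_freeAbove.mp ht).1,
          (mem_freeAbove.mp ht).2⟩
  rw [this, card_insert_of_notMem fun h' => (mem_freeAbove.mp h').1.false]


theorem coSplitH_isSome_iff {zs : List ℕ} (hzs : zs.Pairwise (· < ·)) (b : ℕ) :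
    (coSplitH n C zs b).isSome ↔
      ∀ z ∈ zs, zs.countP (fun w => decide (z ≤ w)) ≤ #(freeAbove n C (max b z)) := by
  induction zs generalizing b with
  | nil => simp [coSplitH]
  | cons z₀ zs ih =>
    have hcount : ∀ z ∈ zs, (z₀ :: zs).countP (fun w => decide (z ≤ w)) =
        zs.countP (fun w => decide (z ≤ w)) := fun z hz => by
      simp [(List.rel_of_pairwise_cons hzs hz).not_ge]
    rw [List.forall_mem_cons, countP_head_le_eq_length hzs,
      forall₂_congr fun z hz => by rw [hcount z hz]]
    rcases hpick : pickAbove n C (max b z₀) with _ | h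
    · simp [coSplitH, hpick, pickAbove_eq_none_iff.mp hpick]
    · have hbh : b < h := (le_max_left b z₀).trans_lt
        (mem_freeAbove.mp (pickAbove_eq_some_iff.mp hpick).1).1
      simp only [coSplitH, hpick, Option.isSome_map, ih hzs.of_cons,
        card_freeAbove_of_pickAbove hpick, add_le_add_iff_right]
      constructor
      · intro hrest
        refine ⟨?_, fun z hz => (hrest z hz).trans (card_freeAbove_antitone (by omega))⟩
        cases zs with
        | nil => simp
        | cons z₁ zs =>
          calc (z₁ :: zs).length ≤ _ := by
                rw [List.length_cons, ← countP_head_le_eq_length hzs.of_cons]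
                exact hrest z₁ List.mem_cons_self
            _ ≤ #(freeAbove n C h) := card_freeAbove_antitone (le_max_left h z₁)
      · rintro ⟨hlen, hrest⟩ z hz
        rcases le_or_gt h z with hhz | hzh
        · simpa [max_eq_right hhz, max_eq_right (hbh.le.trans hhz)] using hrest z hz
        · rw [max_eq_left hzh.le]
          exact List.countP_le_length.trans hlen

end Greedy

section Counting

variable {n : ℕ} {C : List ℕ}

theorem countP_between_bar_eq_sum (hC : C.Nodup) {z : ℕ} (hz : z ≤ n) :
    C.countP (fun x => decide (z ≤ x ∧ x ≤ bar n z)) =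
      ∑ t ∈ Ico z (n + 1), ((if t ∈ C then 1 else 0) + (if bar n t ∈ C then 1 else 0)) := by
  have hbar : n + 1 ≤ bar n z + 1 := by unfold bar; omega
  calc C.countP (fun x => decide (z ≤ x ∧ x ≤ bar n z))
      = #((Ico z (bar n z + 1)).filter (· ∈ C)) := by
        rw [List.countP_eq_length_filter, ← List.toFinset_card_of_nodup (hC.filter _)]
        congr 1
        ext x
        simp only [List.toFinset_filter, mem_filter, List.mem_toFinset, decide_eq_true_eq,
          mem_Ico, Nat.lt_succ_iff]
        tauto
    _ = ∑ x ∈ Ico z (bar n z + 1), if x ∈ C then 1 else 0 := card_filter _ _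
    _ = ∑ t ∈ Ico z (n + 1), (if t ∈ C then 1 else 0) +
          ∑ t ∈ Ico (n + 1) (bar n z + 1), if t ∈ C then 1 else 0 :=
        (sum_Ico_consecutive _ (by omega) hbar).symm
    _ = ∑ t ∈ Ico z (n + 1), (if t ∈ C then 1 else 0) +
          ∑ t ∈ Ico z (n + 1), if bar n t ∈ C then 1 else 0 := by
        unfold bar
        rw [sum_Ico_reflect (fun x => if x ∈ C then 1 else 0) z (by omega : n + 1 ≤ 2 * n + 1 + 1),
          show 2 * n + 1 + 1 - (n + 1) = n + 1 by omega,
          show 2 * n + 1 + 1 - z = 2 * n + 1 - z + 1 by omega]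
    _ = _ := sum_add_distrib.symm

theorem countP_between_bar_add_card_free (hC : C.Nodup) {z : ℕ} (hz : z ≤ n) :
    C.countP (fun x => decide (z ≤ x ∧ x ≤ bar n z)) +
        #((Ico z (n + 1)).filter (fun t => t ∉ C ∧ bar n t ∉ C)) =
      (n + 1 - z) + #((Ico z (n + 1)).filter (fun t => t ∈ C ∧ bar n t ∈ C)) := by
  have hcard : n + 1 - z = ∑ _t ∈ Ico z (n + 1), 1 := by simp
  rw [countP_between_bar_eq_sum hC hz, card_filter, card_filter, hcard, ← sum_add_distrib,
    ← sum_add_distrib]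
  refine sum_congr rfl fun t _ => ?_
  by_cases h₁ : t ∈ C <;> by_cases h₂ : bar n t ∈ C <;> simp [h₁, h₂]

theorem freeAbove_eq_filter_Ico {z : ℕ} (hz : z ∈ C) :
    freeAbove n C z = (Ico z (n + 1)).filter (fun t => t ∉ C ∧ bar n t ∉ C) := by
  ext t
  rw [mem_freeAbove, mem_filter, mem_Ico]
  constructor
  · rintro ⟨hzt, htn, hfree⟩
    exact ⟨⟨hzt.le, by omega⟩, hfree⟩
  · rintro ⟨⟨hzt, htn⟩, hfree⟩
    exact ⟨hzt.lt_of_ne (by rintro rfl; exact hfree.1 hz), by omega, hfree⟩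

theorem mem_IlistAsc {z : ℕ} : z ∈ IlistAsc n C ↔ 1 ≤ z ∧ z ≤ n ∧ z ∈ C ∧ bar n z ∈ C := by
  simp only [IlistAsc, List.mem_filter, List.mem_range, decide_eq_true_eq]
  exact ⟨fun ⟨hzn, h1, hC⟩ => ⟨h1, by omega, hC⟩, fun ⟨h1, hzn, hC⟩ => ⟨by omega, h1, hC⟩⟩

theorem countP_IlistAsc {z : ℕ} (hz : 1 ≤ z) :
    (IlistAsc n C).countP (fun w => decide (z ≤ w)) =
      #((Ico z (n + 1)).filter (fun t => t ∈ C ∧ bar n t ∈ C)) := by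
  rw [IlistAsc, List.countP_filter, List.countP_eq_length_filter,
    ← List.toFinset_card_of_nodup (List.nodup_range.filter _), List.toFinset_filter,
    List.toFinset_range]
  congr 1
  ext t
  simp only [mem_filter, mem_range, mem_Ico, Bool.and_eq_true, decide_eq_true_eq]
  exact ⟨fun ⟨htn, hzt, _, hd⟩ => ⟨⟨hzt, htn⟩, hd⟩,
    fun ⟨⟨hzt, htn⟩, hd⟩ => ⟨htn, hzt, by omega, hd⟩⟩

end Counting

theorem coAdm_iff_forall_countP_le (n : ℕ) {C : List ℕ} (hC : C.Nodup) :
    CoAdm n C ↔ ∀ z ∈ IlistAsc n C,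
      (IlistAsc n C).countP (fun w => decide (z ≤ w)) ≤ #(freeAbove n C z) := by
  simp only [CoAdm, mem_IlistAsc, and_imp]
  refine forall_congr' fun z => imp_congr_right fun h₁ => imp_congr_right fun h₂ =>
    imp_congr_right fun h₃ => imp_congr_right fun _ => ?_
  have := countP_between_bar_add_card_free hC h₂
  rw [countP_IlistAsc h₁, freeAbove_eq_filter_Ico h₃]
  omega

theorem hasCoSplit_iff_forall_countP_le (n : ℕ) (C : List ℕ) :
    HasCoSplit n C ↔ ∀ z ∈ IlistAsc n C,
      (IlistAsc n C).countP (fun w => decide (z ≤ w)) ≤ #(freeAbove n C z) := by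
  rw [HasCoSplit, coSplitH_isSome_iff (zs := IlistAsc n C) (List.pairwise_lt_range.filter _)]
  simp only [Nat.zero_max]

/-- a column is coadmissible iff the set `H = {h₁ > ⋯ > h_r}` of the
coadmissibility criterion exists. -/
theorem coadmissible_iff_hasCoSplit (n : ℕ) (C : List ℕ) (hC : IsColumn n C) :
    CoAdm n C ↔ HasCoSplit n C :=
  (coAdm_iff_forall_countP_le n (List.isChain_iff_pairwise.mp hC.1).nodup).trans
    (hasCoSplit_iff_forall_countP_le n C).symm
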